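/- For every natural number n ≥ 2 there exists a finite topological T₀-space X such that X has exactly one down beat point and the number of distinct semiflows on X equals n, i.e., S_F(X) = n. -/

import Mathlib

open NNReal

/-- A semiflow on a topological space `X`: a jointly continuous map
`φ : ℝ≥0 × X → X` with `φ 0 x = x` and `φ s (φ t x) = φ (s + t) x`. -/
def IsSemiflow {X : Type*} [TopologicalSpace X] (φ : ℝ≥0 → X → X) : Prop :=
  Continuous (fun p : ℝ≥0 × X => φ p.1 p.2) ∧
  (∀ x : X, φ 0 x = x) ∧
  ∀ (s t : ℝ≥0) (x : X), φ s (φ t x) = φ (s + t) x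

/-- A semiflow is trivial if every time-`t` map is the identity. -/
def IsTrivialSemiflow {X : Type*} [TopologicalSpace X] (φ : ℝ≥0 → X → X) : Prop :=
  ∀ (t : ℝ≥0) (x : X), φ t x = x

/-- `x` is a down beat point: `U_x \ {x}` has a greatest element in the
specialization order (`y ⤳ x` means `y ≤ x`, i.e. `y ∈ U_x`). -/
def IsDownBeatPoint {X : Type*} [TopologicalSpace X] (x : X) : Prop :=
  ∃ m : X, (m ⤳ x ∧ m ≠ x) ∧ ∀ y : X, y ⤳ x → y ≠ x → y ⤳ m

/-- `x` is an up beat point: `F_x \ {x}` has a least element in the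
specialization order. -/
def IsUpBeatPoint {X : Type*} [TopologicalSpace X] (x : X) : Prop :=
  ∃ m : X, (x ⤳ m ∧ m ≠ x) ∧ ∀ y : X, x ⤳ y → y ≠ x → m ⤳ y

/-!
On a finite `T₀`-space, continuity at time `0` makes every time-`t` map move points down the
specialization order, and a pigeonhole argument along an orbit shows that all time-`t` maps with
`t > 0` coincide. Hence semiflows correspond to continuous idempotent maps `r` with `r x ≤ x`.

The example is the poset with chains `g 0 < ⋯ < g k` and `t 0 < ⋯ < t k`, `g i < t j` for `i ≤ j`,
and points `a i < g j, t j` for `i < j`, with the topology of lower sets. Such an `r` fixes every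
`a i` and `g i` and sends `t i` to `g i` or `t i`, the moved `t i` forming an initial segment:
`k + 2` semiflows. The only down beat point is `t 0`; the `a i` keep `g (i + 1)` from being one.
-/

open scoped Topology

lemma Fin.exists_val_add_one_eq {n : ℕ} {i : Fin (n + 1)} (hi : i ≠ 0) :
    ∃ p : Fin (n + 1), (p : ℕ) + 1 = i :=
  have : (i : ℕ) ≠ 0 := Fin.val_ne_zero_iff.2 hi
  ⟨⟨i - 1, by omega⟩, by dsimp only; omega⟩

lemma NNReal.exists_nsmul_eq_of_lt (t : ℝ≥0) {ε : ℝ≥0} (hε : 0 < ε) :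
    ∃ (m : ℕ) (s : ℝ≥0), s < ε ∧ m • s = t := by
  obtain ⟨m, hm⟩ := exists_nat_gt (t / ε)
  have hm0 : (m : ℝ≥0) ≠ 0 := (pos_of_gt hm).ne'
  refine ⟨m, t / m, ?_, by rw [nsmul_eq_mul, mul_div_cancel₀ t hm0]⟩
  rwa [div_lt_iff₀ (pos_iff_ne_zero.2 hm0), mul_comm, ← div_lt_iff₀ hε]

noncomputable def jumpFlow {X : Type*} (r : X → X) (t : ℝ≥0) : X → X :=
  if t = 0 then id else r

def IsDownRetraction {X : Type*} [TopologicalSpace X] (r : X → X) : Prop :=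
  Continuous r ∧ (∀ x, r x ⤳ x) ∧ ∀ x, r (r x) = r x

section Semiflow

variable {X : Type*} [TopologicalSpace X]

lemma IsDownRetraction.isSemiflow_jumpFlow {r : X → X} (hr : IsDownRetraction r) :
    IsSemiflow (jumpFlow r) := by
  obtain ⟨hcont, hdown, hidem⟩ := hr
  refine ⟨?_, fun x => by simp [jumpFlow], fun s t x => ?_⟩
  · refine continuous_def.2 fun U hU => ?_
    have hpre : (fun p : ℝ≥0 × X => jumpFlow r p.1 p.2) ⁻¹' U =
        Set.univ ×ˢ U ∪ Set.Ioi 0 ×ˢ (r ⁻¹' U) := by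
      ext ⟨t, x⟩
      rcases eq_or_ne t 0 with rfl | ht
      · simp [jumpFlow]
      · simpa [jumpFlow, ht, pos_iff_ne_zero] using
          (or_iff_right_of_imp ((hdown x).mem_open hU ·)).symm
    rw [hpre]
    exact (isOpen_univ.prod hU).union (isOpen_Ioi.prod (hU.preimage hcont))
  · rcases eq_or_ne s 0 with rfl | hs
    · simp [jumpFlow]
    rcases eq_or_ne t 0 with rfl | ht
    · simp [jumpFlow]
    simp [jumpFlow, hs, ht, hidem]

namespace IsSemiflow

variable {φ : ℝ≥0 → X → X}

lemma continuous_apply (hφ : IsSemiflow φ) (t : ℝ≥0) : Continuous (φ t) :=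
  hφ.1.comp (continuous_const.prodMk continuous_id)

lemma apply_nsmul (hφ : IsSemiflow φ) (m : ℕ) (s : ℝ≥0) (x : X) :
    φ (m • s) x = (φ s)^[m] x := by
  induction m with
  | zero => simpa using hφ.2.1 x
  | succ m ih => rw [succ_nsmul', ← hφ.2.2, ih, Function.iterate_succ_apply']

lemma apply_eq_self_of_forall_le (hφ : IsSemiflow φ) {p : ℝ≥0} (hp : 0 < p) {y : X}
    (hy : ∀ s ≤ p, φ s y = y) (t : ℝ≥0) : φ t y = y := by
  obtain ⟨m, s, hs, rfl⟩ := NNReal.exists_nsmul_eq_of_lt t hp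
  rw [hφ.apply_nsmul]
  exact Function.iterate_fixed (hy s hs.le) m

section Finite

variable [Finite X]

lemma eventually_specializes (hφ : IsSemiflow φ) : ∀ᶠ s in 𝓝 0, ∀ x, φ s x ⤳ x := by
  refine Filter.eventually_all.2 fun x => ?_
  have hcont : Continuous (φ · x) := hφ.1.comp (continuous_id.prodMk continuous_const)
  have hx : nhdsKer {x} ∈ 𝓝 (φ 0 x) := by
    rw [hφ.2.1, ← principal_nhdsKer_singleton]
    exact Filter.mem_principal_self _
  filter_upwards [hcont.continuousAt.preimage_mem_nhds hx] with s hs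
  simpa [mem_nhdsKer_iff_specializes] using hs

lemma specializes_apply (hφ : IsSemiflow φ) (t : ℝ≥0) (x : X) : φ t x ⤳ x := by
  obtain ⟨ε, hε, hsmall⟩ := NNReal.nhds_zero_basis.eventually_iff.1 hφ.eventually_specializes
  obtain ⟨m, s, hs, rfl⟩ := NNReal.exists_nsmul_eq_of_lt t hε
  rw [hφ.apply_nsmul]
  induction m with
  | zero => exact specializes_rfl
  | succ m ih =>
    rw [Function.iterate_succ_apply']
    exact (hsmall hs _).trans ih

lemma specializes_apply_of_le (hφ : IsSemiflow φ) (x : X) {s t : ℝ≥0} (hst : s ≤ t) :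
    φ t x ⤳ φ s x := by
  rw [← tsub_add_cancel_of_le hst, ← hφ.2.2]
  exact hφ.specializes_apply _ _

variable [T0Space X]

/-- By pigeonhole an orbit takes the same value at two times `s < s'` in `[0, a]`; squeezed
between them, `φ s x` is fixed for times in `[0, s' - s]`, hence for all times. -/
lemma exists_forall_ge_apply_eq (hφ : IsSemiflow φ) (x : X) {a : ℝ≥0} (ha : 0 < a) :
    ∃ s ≤ a, ∀ b, s ≤ b → φ b x = φ s x := by
  obtain ⟨s, hs, s', -, hlt, heq⟩ := (Set.Icc_infinite ha).exists_lt_map_eq_of_mapsTo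
    (Set.mapsTo_univ (φ · x) _) Set.finite_univ
  have hfix : ∀ d, φ d (φ s x) = φ s x := by
    refine hφ.apply_eq_self_of_forall_le (tsub_pos_of_lt hlt) fun d hd => ?_
    rw [hφ.2.2]
    refine ((hφ.specializes_apply_of_le x le_add_self).antisymm ?_).eq
    rw [heq]
    exact hφ.specializes_apply_of_le x ((le_tsub_iff_right hlt.le).1 hd)
  refine ⟨s, hs.2, fun b hb => ?_⟩
  rw [← tsub_add_cancel_of_le hb, ← hφ.2.2, hfix]

lemma apply_eq_apply_of_pos (hφ : IsSemiflow φ) {a b : ℝ≥0} (ha : 0 < a) (hb : 0 < b) :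
    φ a = φ b := by
  funext x
  obtain ⟨s, hs, h⟩ := hφ.exists_forall_ge_apply_eq x (lt_min ha hb)
  rw [h a (hs.trans (min_le_left a b)), h b (hs.trans (min_le_right a b))]

lemma eq_jumpFlow (hφ : IsSemiflow φ) : φ = jumpFlow (φ 1) := by
  funext t
  rcases eq_or_ne t 0 with rfl | ht
  · funext x
    simp [jumpFlow, hφ.2.1]
  · simp [jumpFlow, ht, hφ.apply_eq_apply_of_pos (pos_iff_ne_zero.2 ht) one_pos]

lemma isDownRetraction_apply_one (hφ : IsSemiflow φ) : IsDownRetraction (φ 1) := by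
  refine ⟨hφ.continuous_apply 1, hφ.specializes_apply 1, fun x => ?_⟩
  rw [hφ.2.2, hφ.apply_eq_apply_of_pos (by positivity) one_pos]

end Finite

end IsSemiflow

noncomputable def semiflowEquivDownRetraction [Finite X] [T0Space X] :
    {φ : ℝ≥0 → X → X // IsSemiflow φ} ≃ {r : X → X // IsDownRetraction r} where
  toFun φ := ⟨φ.1 1, φ.2.isDownRetraction_apply_one⟩
  invFun r := ⟨jumpFlow r.1, r.2.isSemiflow_jumpFlow⟩
  left_inv φ := Subtype.ext φ.2.eq_jumpFlow.symm
  right_inv r := Subtype.ext (by simp [jumpFlow])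

end Semiflow

namespace Topology.IsLowerSet

variable {α : Type*} [PartialOrder α] [TopologicalSpace α] [Topology.IsLowerSet α]

instance t0Space : T0Space α :=
  (t0Space_iff_inseparable α).2 fun _ _ h =>
    le_antisymm (specializes_iff_le.1 h.specializes) (specializes_iff_le.1 h.specializes')

lemma isDownBeatPoint_iff {x : α} : IsDownBeatPoint x ↔ ∃ m < x, ∀ y < x, y ≤ m := by
  simp only [IsDownBeatPoint, specializes_iff_le, lt_iff_le_and_ne, and_imp]

end Topology.IsLowerSet

inductive Pt (k : ℕ) : Type
  | a : Fin (k + 1) → Pt k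
  | g : Fin (k + 1) → Pt k
  | t : Fin (k + 1) → Pt k
  deriving Fintype

namespace Pt

variable {k : ℕ}

protected def le : Pt k → Pt k → Prop
  | a i, a j => i = j
  | a i, g j | a i, t j => i < j
  | g i, g j | g i, t j | t i, t j => i ≤ j
  | _, _ => False

instance : PartialOrder (Pt k) where
  le := Pt.le
  le_refl x := by cases x <;> simp [Pt.le]
  le_trans x y z := by cases x <;> cases y <;> cases z <;> simp [Pt.le] <;> omega
  le_antisymm x y := by cases x <;> cases y <;> simp [Pt.le] <;> omega

section Order

variable {i j : Fin (k + 1)}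

@[simp] lemma a_le_a : a i ≤ a j ↔ i = j := Iff.rfl
@[simp] lemma a_le_g : a i ≤ g j ↔ i < j := Iff.rfl
@[simp] lemma a_le_t : a i ≤ t j ↔ i < j := Iff.rfl
@[simp] lemma g_le_g : g i ≤ g j ↔ i ≤ j := Iff.rfl
@[simp] lemma g_le_t : g i ≤ t j ↔ i ≤ j := Iff.rfl
@[simp] lemma t_le_t : t i ≤ t j ↔ i ≤ j := Iff.rfl
@[simp] lemma not_g_le_a : ¬g i ≤ a j := id
@[simp] lemma not_t_le_a : ¬t i ≤ a j := id
@[simp] lemma not_t_le_g : ¬t i ≤ g j := id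

end Order

instance : TopologicalSpace (Pt k) := Topology.lowerSet (Pt k)

instance : Topology.IsLowerSet (Pt k) := ⟨rfl⟩

/-- `t 0` covers only `g 0`; every other non-minimal point covers two incomparable points:
`g (i + 1)` covers `g i` and `a i`, and `t (i + 1)` covers `t i` and `g (i + 1)`. -/
lemma isDownBeatPoint_iff {x : Pt k} : IsDownBeatPoint x ↔ x = t 0 := by
  simp only [Topology.IsLowerSet.isDownBeatPoint_iff, lt_iff_le_and_ne]
  constructor
  · rintro ⟨m, hmx, hm⟩
    cases x with
    | a i => cases m <;> simp at hmx
    | g i =>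
      obtain ⟨p, hp⟩ := Fin.exists_val_add_one_eq (i := i) (by rintro rfl; cases m <;> simp at hmx)
      have ha := hm (a p) ⟨a_le_g.2 (by omega), by simp⟩
      have hg := hm (g p) ⟨g_le_g.2 (by omega), by rw [Ne, g.injEq]; omega⟩
      cases m <;> simp at hmx ha hg
      omega
    | t i =>
      by_contra hne
      obtain ⟨p, hp⟩ := Fin.exists_val_add_one_eq (i := i) (by simpa using hne)
      have ht := hm (t p) ⟨t_le_t.2 (by omega), by rw [Ne, t.injEq]; omega⟩
      have hg := hm (g i) ⟨g_le_t.2 le_rfl, by simp⟩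
      cases m <;> simp at hmx ht hg
      omega
  · rintro rfl
    refine ⟨g 0, by simp, fun y hy => ?_⟩
    cases y <;> simp at hy ⊢
    omega

def cut (j : ℕ) : Pt k → Pt k
  | t i => if (i : ℕ) < j then g i else t i
  | x => x

section Cut

variable {j : ℕ} {i : Fin (k + 1)}

@[simp] lemma cut_a : cut j (a i) = a i := rfl
@[simp] lemma cut_g : cut j (g i) = g i := rfl
lemma cut_t : cut j (t i) = if (i : ℕ) < j then g i else t i := rfl

lemma cut_le (j : ℕ) (x : Pt k) : cut j x ≤ x := by
  cases x with
  | t i => rw [cut_t]; split_ifs <;> simp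
  | _ => simp

lemma monotone_cut (j : ℕ) : Monotone (cut j : Pt k → Pt k) := by
  intro x y hxy
  cases x <;> cases y <;> simp only [cut_a, cut_g, cut_t] <;> (try split_ifs) <;> simp_all
  omega

lemma cut_cut (j : ℕ) (x : Pt k) : cut j (cut j x) = cut j x := by
  cases x with
  | t i => rw [cut_t]; split_ifs <;> simp [cut_t, *]
  | _ => simp

lemma cut_injOn : Set.InjOn (cut : ℕ → Pt k → Pt k) (Set.Iic (k + 1)) := by
  intro j hj j' hj' h
  wlog hlt : j < j' generalizing j j'
  · rcases (not_lt.1 hlt).lt_or_eq with hlt' | heq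
    · exact (this hj' hj h.symm hlt').symm
    · exact heq.symm
  have := congrFun h (t ⟨j, by simp only [Set.mem_Iic] at hj'; omega⟩)
  simp [cut_t, hlt] at this

lemma isDownRetraction_cut (j : ℕ) : IsDownRetraction (cut j : Pt k → Pt k) :=
  ⟨Topology.IsLowerSet.monotone_iff_continuous.1 (monotone_cut j),
    fun x => Topology.IsLowerSet.specializes_iff_le.2 (cut_le j x), cut_cut j⟩

end Cut

section Classification

variable {r : Pt k → Pt k}

lemma apply_a_eq (hle : ∀ x, r x ≤ x) (i : Fin (k + 1)) : r (a i) = a i := by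
  have := hle (a i)
  cases h : r (a i) <;> simp_all

lemma apply_g_eq (hr : Monotone r) (hle : ∀ x, r x ≤ x) (i : Fin (k + 1)) : r (g i) = g i := by
  obtain ⟨n, hn⟩ : ∃ n, (i : ℕ) = n := ⟨_, rfl⟩
  induction n generalizing i with
  | zero =>
    have := hle (g i)
    cases h : r (g i) <;> simp [h] at this ⊢ <;> omega
  | succ n ih =>
    obtain ⟨p, hp⟩ : ∃ p : Fin (k + 1), (p : ℕ) = n := ⟨⟨n, by omega⟩, rfl⟩
    have ha : a p ≤ r (g i) := apply_a_eq hle p ▸ hr (a_le_g.2 (by omega))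
    have hg : g p ≤ r (g i) := ih p hp ▸ hr (g_le_g.2 (by omega))
    have := hle (g i)
    cases h : r (g i) <;> simp [h] at this ha hg ⊢
    omega

lemma apply_t_eq_or (hr : Monotone r) (hle : ∀ x, r x ≤ x) (i : Fin (k + 1)) :
    r (t i) = g i ∨ r (t i) = t i := by
  have hg : g i ≤ r (t i) := apply_g_eq hr hle i ▸ hr (g_le_t.2 le_rfl)
  have := hle (t i)
  cases h : r (t i) <;> simp [h] at this hg ⊢ <;> omega

lemma apply_t_eq_of_le (hr : Monotone r) (hle : ∀ x, r x ≤ x) {i i' : Fin (k + 1)}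
    (hi : r (t i) = t i) (hii' : i ≤ i') : r (t i') = t i' := by
  have : t i ≤ r (t i') := hi ▸ hr (t_le_t.2 hii')
  rcases apply_t_eq_or hr hle i' with h | h
  · simp [h] at this
  · exact h

lemma exists_eq_cut (hr : Monotone r) (hle : ∀ x, r x ≤ x) : ∃ j ≤ k + 1, r = cut j := by
  classical
  have hex : ∃ m : ℕ, ∀ i : Fin (k + 1), m ≤ i → r (t i) = t i := ⟨k + 1, fun i hi => by omega⟩
  refine ⟨Nat.find hex, Nat.find_min' hex fun i hi => by omega, funext fun x => ?_⟩
  cases x with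
  | a i => exact apply_a_eq hle i
  | g i => exact apply_g_eq hr hle i
  | t i =>
    rw [cut_t]
    split_ifs with hi
    · refine (apply_t_eq_or hr hle i).resolve_right fun hfix => Nat.find_min hex hi fun i' hii' => ?_
      exact apply_t_eq_of_le hr hle hfix (by omega)
    · exact Nat.find_spec hex i (not_lt.1 hi)

end Classification

lemma card_downRetraction : Nat.card {r : Pt k → Pt k // IsDownRetraction r} = k + 2 := by
  have hbij : Function.Bijective fun j : Fin (k + 2) =>
      (⟨cut j, isDownRetraction_cut j⟩ : {r : Pt k → Pt k // IsDownRetraction r}) := by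
    refine ⟨fun j j' hjj' => Fin.ext ?_, fun ⟨r, hr, hdown, _⟩ => ?_⟩
    · exact cut_injOn (Set.mem_Iic.2 (by omega)) (Set.mem_Iic.2 (by omega))
        (congrArg Subtype.val hjj')
    · obtain ⟨j, hj, rfl⟩ := exists_eq_cut (Topology.IsLowerSet.monotone_iff_continuous.2 hr)
        fun x => Topology.IsLowerSet.specializes_iff_le.1 (hdown x)
      exact ⟨⟨j, by omega⟩, rfl⟩
  rw [← Nat.card_eq_of_bijective _ hbij, Nat.card_eq_fintype_card, Fintype.card_fin]

end Pt

/-- For every `n ≥ 2` there is a finite `T₀`-space with exactly one down beat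
point and exactly `n` semiflows. -/
theorem exists_space_with_n_semiflows (n : ℕ) (hn : 2 ≤ n) :
    ∃ (X : Type) (t : TopologicalSpace X), Finite X ∧ @T0Space X t ∧
      (∃! x : X, @IsDownBeatPoint X t x) ∧
      Nat.card {φ : ℝ≥0 → X → X // @IsSemiflow X t φ} = n := by
  obtain ⟨k, rfl⟩ : ∃ k, n = k + 2 := ⟨n - 2, by omega⟩
  refine ⟨Pt k, inferInstance, inferInstance, inferInstance, ⟨.t 0, ?_⟩, ?_⟩
  · exact ⟨Pt.isDownBeatPoint_iff.2 rfl, fun x => Pt.isDownBeatPoint_iff.1⟩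
  · rw [Nat.card_congr semiflowEquivDownRetraction, Pt.card_downRetraction]
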